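/- arXiv:2206.07613 — 2 statements merged into one kernel-verified Lean document; each statement's English description precedes it below -/
import Mathlib

section
/- The number of ordered pairs (f, g) of coprime polynomials in F_q[t] with max(deg f, deg g) = r is (q-1)(q^{2r+1} - q^{2r-1}) for r ≥ 1. -/
/-!
Every nonzero pair `(f, g)` factors uniquely as `h • (f₀, g₀)` with `h = gcd f g` monic and
`(f₀, g₀)` coprime, and there are `q ^ d` monic polynomials of degree `d`. Writing `N r` and
`C r` for the numbers of all, resp. coprime, pairs with `max (deg f) (deg g) = r`, this gives
`N r = ∑_{d + e = r} q ^ d * C e`, hence `C (r + 1) = N (r + 1) - q * N r`. Finally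
`N r = q ^ (2 r + 2) - q ^ (2 r)`, since the pairs with both degrees `≤ r`, resp. `< r`, are
`(F ^ (r + 1))²`, resp. `(F ^ r)²`.
-/

open Polynomial

theorem Nat.card_subtype_prod_and {α : Type*} (P : α → Prop) :
    Nat.card {x : α × α // P x.1 ∧ P x.2} = Nat.card {a // P a} ^ 2 := by
  rw [Nat.card_congr Equiv.subtypeProdEquivProd, Nat.card_prod, sq]

open Finset in
theorem Nat.card_subtype_add_eq_sum_antidiagonal {A B : Type*} (α : A → ℕ) (β : B → ℕ)
    [∀ d, Finite {a // α a = d}] [∀ e, Finite {b // β b = e}] (r : ℕ) :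
    Nat.card {x : A × B // α x.1 + β x.2 = r} =
      ∑ de ∈ antidiagonal r, Nat.card {a // α a = de.1} * Nat.card {b // β b = de.2} := by
  let e : {x : A × B // α x.1 + β x.2 = r} ≃
      Σ de : antidiagonal r, {a // α a = de.1.1} × {b // β b = de.1.2} :=
    { toFun x :=
        ⟨⟨(α x.1.1, β x.1.2), mem_antidiagonal.2 x.2⟩, ⟨x.1.1, rfl⟩, ⟨x.1.2, rfl⟩⟩
      invFun y := ⟨(y.2.1, y.2.2), by
        rw [y.2.1.2, y.2.2.2]; exact mem_antidiagonal.1 y.1.2⟩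
      left_inv _ := rfl
      right_inv := by
        rintro ⟨⟨⟨d, e⟩, h⟩, ⟨a, ha⟩, ⟨b, hb⟩⟩
        dsimp only at ha hb
        subst ha hb
        rfl }
  rw [Nat.card_congr e, Nat.card_sigma, ← sum_coe_sort (antidiagonal r)]
  simp only [Nat.card_prod]

section Semiring

variable {R : Type*} [Semiring R]

theorem Polynomial.card_degree_lt (n : ℕ) :
    Nat.card {p : R[X] // p.degree < n} = Nat.card R ^ n := by
  rw [Nat.card_congr ((Equiv.subtypeEquivRight fun _ ↦ mem_degreeLT.symm).trans
    (degreeLTEquiv R n).toEquiv)]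
  simp [Nat.card_pi]

theorem Polynomial.card_degree_le (n : ℕ) :
    Nat.card {p : R[X] // p.degree ≤ n} = Nat.card R ^ (n + 1) := by
  rw [← card_degree_lt]
  simp_rw [← mem_degreeLE, ← degreeLT_succ_eq_degreeLE, mem_degreeLT]

theorem Polynomial.max_degree_eq_natDegree {p : R[X] × R[X]} (hp : p ≠ 0) :
    max p.1.degree p.2.degree = (max p.1.natDegree p.2.natDegree : ℕ) := by
  obtain ⟨f, g⟩ := p
  by_cases hf : f = 0
  · have hg : g ≠ 0 := by rintro rfl; exact hp (by rw [hf]; rfl)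
    simp [hf, degree_eq_natDegree hg]
  by_cases hg : g = 0
  · simp [hg, degree_eq_natDegree hf]
  simp [degree_eq_natDegree hf, degree_eq_natDegree hg, Nat.cast_withBot]

theorem Polynomial.max_degree_eq_coe_iff {p : R[X] × R[X]} {n : ℕ} :
    max p.1.degree p.2.degree = n ↔ p ≠ 0 ∧ max p.1.natDegree p.2.natDegree = n := by
  by_cases hp : p = 0
  · simp [hp]
  rw [max_degree_eq_natDegree hp, Nat.cast_inj]
  exact (and_iff_right hp).symm

theorem Polynomial.finite_of_max_degree_le [Finite R] {P : R[X] × R[X] → Prop} (n : ℕ)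
    (hP : ∀ p, P p → max p.1.degree p.2.degree ≤ n) : Finite {p // P p} := by
  have : Finite {p : R[X] × R[X] // max p.1.degree p.2.degree ≤ n} := by
    refine Nat.finite_of_card_ne_zero ?_
    simp_rw [max_le_iff, Nat.card_subtype_prod_and (fun p : R[X] ↦ p.degree ≤ n),
      card_degree_le]
    exact pow_ne_zero _ (pow_ne_zero _ Nat.card_pos.ne')
  exact .of_injective (Subtype.impEmbedding _ _ hP) (Subtype.impEmbedding _ _ hP).injective

theorem Polynomial.card_max_degree_eq_add [Finite R] (n : ℕ) :
    Nat.card {p : R[X] × R[X] // max p.1.degree p.2.degree = n} + Nat.card R ^ (2 * n) =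
      Nat.card R ^ (2 * n + 2) := by
  classical
  have hle : Nat.card {p : R[X] × R[X] // max p.1.degree p.2.degree ≤ n} =
      Nat.card R ^ (2 * n + 2) := by
    simp_rw [max_le_iff, Nat.card_subtype_prod_and (fun p : R[X] ↦ p.degree ≤ n),
      card_degree_le]
    ring
  have hlt : Nat.card {p : R[X] × R[X] // max p.1.degree p.2.degree < n} =
      Nat.card R ^ (2 * n) := by
    simp_rw [max_lt_iff, Nat.card_subtype_prod_and (fun p : R[X] ↦ p.degree < n),
      card_degree_lt]
    ring
  have := finite_of_max_degree_le (R := R) n fun _ h ↦ le_of_lt h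
  have := finite_of_max_degree_le (R := R) n fun _ h ↦ le_of_eq h
  rw [← hle, ← hlt, ← Nat.card_sum,
    Nat.card_congr ((Equiv.subtypeEquivRight fun _ ↦ le_iff_eq_or_lt).trans
      (subtypeOrEquiv _ _ fun _ h₁ h₂ x hx ↦ (h₂ x hx).ne (h₁ x hx)))]

end Semiring

theorem Polynomial.max_natDegree_smul {R : Type*} [Ring R] [IsDomain R] {h : R[X]} (hh : h ≠ 0)
    {p : R[X] × R[X]} (hp : p ≠ 0) :
    max (h • p).1.natDegree (h • p).2.natDegree =
      h.natDegree + max p.1.natDegree p.2.natDegree := by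
  apply Nat.cast_injective (R := WithBot ℕ)
  rw [← max_degree_eq_natDegree (smul_ne_zero hh hp), Nat.cast_add,
    ← max_degree_eq_natDegree hp, ← degree_eq_natDegree hh, Prod.smul_fst, Prod.smul_snd,
    smul_eq_mul, smul_eq_mul, degree_mul, degree_mul, max_add_add_left]

section Ring

variable {R : Type*} [Ring R] [Nontrivial R]

noncomputable def Polynomial.isMonicOfDegreeEquivDegreeLT (d : ℕ) :
    {h : R[X] // IsMonicOfDegree h d} ≃ {p : R[X] // p.degree < d} where
  toFun h := ⟨h.1 - X ^ d, by
    have hdeg : h.1.degree = (X ^ d : R[X]).degree := by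
      rw [degree_X_pow, degree_eq_natDegree h.2.ne_zero, h.2.natDegree_eq]
    simpa [hdeg] using degree_sub_lt_left hdeg h.2.ne_zero
      (by rw [h.2.leadingCoeff_eq, leadingCoeff_X_pow])⟩
  invFun p := ⟨X ^ d + p.1, (isMonicOfDegree_iff' _ _).2
    ⟨by rw [natDegree_add_eq_left_of_degree_lt (by rw [degree_X_pow]; exact p.2),
        natDegree_X_pow],
      monic_X_pow_add p.2⟩⟩
  left_inv h := Subtype.ext (add_sub_cancel _ _)
  right_inv p := Subtype.ext (add_sub_cancel_left _ _)

theorem Polynomial.card_isMonicOfDegree (d : ℕ) :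
    Nat.card {h : R[X] // IsMonicOfDegree h d} = Nat.card R ^ d := by
  rw [Nat.card_congr (isMonicOfDegreeEquivDegreeLT d), card_degree_lt]

end Ring

section Field

variable {F : Type*} [Field F]

theorem Polynomial.gcd_mul_mul_of_isCoprime [DecidableEq F] {h f g : F[X]} (hh : h.Monic)
    (hfg : IsCoprime f g) : gcd (h * f) (h * g) = h := by
  rw [gcd_mul_left, hh.normalize_eq_self, ← normalize_gcd,
    normalize_eq_one.2 ((gcd_isUnit_iff _ _).2 hfg), mul_one]

theorem Polynomial.monic_gcd [DecidableEq F] {f g : F[X]} (h : gcd f g ≠ 0) :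
    (gcd f g).Monic := by
  simpa only [normalize_gcd] using monic_normalize h

@[simps]
noncomputable def Polynomial.monicMulCoprimeEquiv [DecidableEq F] :
    {h : F[X] // h.Monic} × {p : F[X] × F[X] // IsCoprime p.1 p.2} ≃
      {p : F[X] × F[X] // p ≠ 0} where
  toFun x := ⟨x.1.1 • x.2.1, smul_ne_zero x.1.2.ne_zero fun h ↦
    not_isCoprime_zero_zero (h ▸ x.2.2)⟩
  invFun p :=
    have hp : gcd p.1.1 p.1.2 ≠ 0 := by simpa [Prod.ext_iff] using p.2
    (⟨gcd p.1.1 p.1.2, monic_gcd hp⟩,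
      ⟨(p.1.1 / gcd p.1.1 p.1.2, p.1.2 / gcd p.1.1 p.1.2),
        isCoprime_div_gcd_div_gcd_of_gcd_ne_zero hp⟩)
  left_inv := by
    rintro ⟨⟨h, hh⟩, ⟨f, g⟩, hfg⟩
    simp [Prod.smul_mk, gcd_mul_mul_of_isCoprime hh hfg, hh.ne_zero]
  right_inv := by
    rintro ⟨⟨f, g⟩, hp⟩
    have hp' : gcd f g ≠ 0 := by simpa [Prod.ext_iff] using hp
    simp [EuclideanDomain.mul_div_cancel' hp', gcd_dvd_left, gcd_dvd_right]

open Finset in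
theorem Polynomial.card_max_degree_eq_sum [Finite F] (r : ℕ) :
    Nat.card {p : F[X] × F[X] // max p.1.degree p.2.degree = r} =
      ∑ de ∈ antidiagonal r, Nat.card F ^ de.1 *
        Nat.card {p : F[X] × F[X] // IsCoprime p.1 p.2 ∧ max p.1.degree p.2.degree = de.2} := by
  classical
  let monicFiber (d : ℕ) : {h : {h : F[X] // h.Monic} // h.1.natDegree = d} ≃
      {h : F[X] // IsMonicOfDegree h d} :=
    (Equiv.subtypeSubtypeEquivSubtypeInter _ _).trans
      (Equiv.subtypeEquivRight fun h ↦ (and_comm.trans (isMonicOfDegree_iff' h d).symm))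
  let coprimeFiber (e : ℕ) : {c : {p : F[X] × F[X] // IsCoprime p.1 p.2} //
        max c.1.1.natDegree c.1.2.natDegree = e} ≃
      {p : F[X] × F[X] // IsCoprime p.1 p.2 ∧ max p.1.degree p.2.degree = e} :=
    (Equiv.subtypeSubtypeEquivSubtypeInter (fun p : F[X] × F[X] ↦ IsCoprime p.1 p.2)
      (fun p ↦ max p.1.natDegree p.2.natDegree = e)).trans (Equiv.subtypeEquivRight fun p ↦ by
        rw [max_degree_eq_coe_iff]
        exact and_congr_right fun hp ↦
          (and_iff_right fun h ↦ not_isCoprime_zero_zero (h ▸ hp)).symm)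
  have (d : ℕ) : Finite {h : {h : F[X] // h.Monic} // h.1.natDegree = d} :=
    Nat.finite_of_card_ne_zero <| by
      rw [Nat.card_congr (monicFiber d), card_isMonicOfDegree]
      exact pow_ne_zero _ Nat.card_pos.ne'
  have (e : ℕ) : Finite {c : {p : F[X] × F[X] // IsCoprime p.1 p.2} //
      max c.1.1.natDegree c.1.2.natDegree = e} :=
    have := finite_of_max_degree_le (P := fun p : F[X] × F[X] ↦
      IsCoprime p.1 p.2 ∧ max p.1.degree p.2.degree = e) e fun _ h ↦ h.2.le
    .of_equiv _ (coprimeFiber e).symm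
  let factor : {x : {h : F[X] // h.Monic} × {p : F[X] × F[X] // IsCoprime p.1 p.2} //
        x.1.1.natDegree + max x.2.1.1.natDegree x.2.1.2.natDegree = r} ≃
      {p : F[X] × F[X] // max p.1.degree p.2.degree = r} :=
    (monicMulCoprimeEquiv.subtypeEquiv fun x ↦ by
      rw [monicMulCoprimeEquiv_apply_coe,
        max_natDegree_smul x.1.2.ne_zero fun h ↦ not_isCoprime_zero_zero (h ▸ x.2.2)]).trans <|
    (Equiv.subtypeSubtypeEquivSubtypeInter _ _).trans
      (Equiv.subtypeEquivRight fun _ ↦ max_degree_eq_coe_iff.symm)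
  rw [← Nat.card_congr factor, Nat.card_subtype_add_eq_sum_antidiagonal
    (fun h : {h : F[X] // h.Monic} ↦ h.1.natDegree)
    (fun c : {p : F[X] × F[X] // IsCoprime p.1 p.2} ↦ max c.1.1.natDegree c.1.2.natDegree)]
  refine sum_congr rfl fun de _ ↦ ?_
  rw [Nat.card_congr (monicFiber _), Nat.card_congr (coprimeFiber _), card_isMonicOfDegree]

theorem Polynomial.card_max_degree_succ [Finite F] (n : ℕ) :
    Nat.card {p : F[X] × F[X] // max p.1.degree p.2.degree = (n + 1 : ℕ)} =
      Nat.card {p : F[X] × F[X] //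
          IsCoprime p.1 p.2 ∧ max p.1.degree p.2.degree = (n + 1 : ℕ)} +
        Nat.card F * Nat.card {p : F[X] × F[X] // max p.1.degree p.2.degree = n} := by
  rw [card_max_degree_eq_sum, card_max_degree_eq_sum, Finset.Nat.sum_antidiagonal_succ,
    Finset.mul_sum, pow_zero, one_mul]
  simp only [pow_succ', mul_assoc]

end Field

/-- The number of ordered pairs `(f, g)` of coprime polynomials in `𝔽_q[t]` with
`max(deg f, deg g) = r` is `(q-1)(q^{2r+1} - q^{2r-1})` for `r ≥ 1`.  (Here
`deg 0 = -∞`, i.e. `⊥` in `WithBot ℕ`; coprime pairs are ordered and `(0,0)` is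
automatically excluded since it is not a coprime pair.) -/
theorem stmt_15 (Fq : Type) [Field Fq] [Fintype Fq] (q : ℕ) (hq : Fintype.card Fq = q)
    (r : ℕ) (hr : 1 ≤ r) :
    Nat.card {p : Polynomial Fq × Polynomial Fq //
        IsCoprime p.1 p.2 ∧ max p.1.degree p.2.degree = (r : WithBot ℕ)}
      = (q - 1) * (q ^ (2 * r + 1) - q ^ (2 * r - 1)) := by
  obtain ⟨n, rfl⟩ := Nat.exists_eq_add_of_le' hr
  rw [← Nat.card_eq_fintype_card] at hq
  subst hq
  have hrec := card_max_degree_succ (F := Fq) n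
  have hsucc := card_max_degree_eq_add (R := Fq) (n + 1)
  have hn := card_max_degree_eq_add (R := Fq) n
  have hq_pos : 1 ≤ Nat.card Fq := Nat.card_pos
  have hle : Nat.card Fq ^ (2 * n + 1) ≤ Nat.card Fq ^ (2 * n + 3) :=
    Nat.pow_le_pow_right hq_pos (by omega)
  rw [show 2 * (n + 1) + 1 = 2 * n + 3 by ring, show 2 * (n + 1) - 1 = 2 * n + 1 by omega]
  zify [hq_pos, hle] at hrec hsucc hn ⊢
  linear_combination hsucc - hrec - Nat.card Fq * hn
end

section
/- Let K be a global function field with ring A of functions regular outside a fixed place ∞, and let D be an effective divisor supported away from ∞ with corresponding ideal 𝔡 ⊆ A. Then the map [(x_0,…,x_n)] ↦ [x_0 : ⋯ : x_n] is a bijection from {x ∈ (K^{n+1}\{0})/A^× : ht_∞(x) + deg D = r, 𝔇_0(x) = D} onto {x ∈ P^n(K) : ht(x) = r, [𝔇_0(x)] = [D]}. -/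
open scoped Classical

/-- `min_i v(x_i)`, the minimum of `v` over the nonzero coordinates of `x`
(convention `v(0) = ∞`; junk value `0` if `x = 0`). -/
noncomputable def minVal {K : Type} [Field K] {m : ℕ} (v : K → ℤ) (x : Fin m → K) : ℤ :=
  (Finset.univ.inf fun i => if x i = 0 then (⊤ : WithTop ℤ) else (v (x i) : WithTop ℤ)).untopD 0

/-- The height `ht(x) = deg 𝔇_0(x) + ht_∞(x)` of `x ∈ K^{n+1} \ {0}`. -/
noncomputable def htGlobal {K : Type} [Field K] {n : ℕ} {V : Type}
    (val : V → K → ℤ) (deg : V → ℕ) (vinf : V) (x : Fin (n + 1) → K) : ℤ :=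
  (∑ᶠ v ∈ {v : V | v ≠ vinf}, (deg v : ℤ) * minVal (val v) x)
    + (deg vinf : ℤ) * minVal (val vinf) x

/-!
By the product formula, `ht(c • x) = ht(x)` for `c ∈ Kˣ`, and when `𝔇_0(x) = D` the finite part
of `ht(x)` is `deg D`, so `ht(x) = ht_∞(x) + deg D`. If `[𝔇_0(p)] = [D]`, say
`𝔇_0(p) = D + div λ` away from `∞`, then `λ⁻¹ • p` is a representative with `𝔇_0 = D`; and two
representatives with the same `𝔇_0` differ by a scalar of valuation `0` at every finite place,
i.e. by a unit of `A`.
-/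

section MinVal

variable {K : Type} [Field K] {m : ℕ} (v : K → ℤ)

lemma nonempty_filter_ne_zero {x : Fin m → K} (hx : x ≠ 0) :
    (Finset.univ.filter fun i => x i ≠ 0).Nonempty := by
  obtain ⟨i, hi⟩ := Function.ne_iff.1 hx
  exact ⟨i, by simpa using hi⟩

lemma minVal_eq_inf' {x : Fin m → K} (hx : x ≠ 0) :
    minVal v x = (Finset.univ.filter fun i => x i ≠ 0).inf' (nonempty_filter_ne_zero hx)
      fun i => v (x i) := by
  rw [minVal, Finset.inf_ite, Finset.inf_top, top_inf_eq,
    show (fun i => ((v (x i) : ℤ) : WithTop ℤ)) = (↑) ∘ fun i => v (x i) from rfl,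
    ← Finset.coe_inf' (nonempty_filter_ne_zero hx), WithTop.untopD_coe]

variable {v}

lemma minVal_smul (hv : ∀ a b : K, a ≠ 0 → b ≠ 0 → v (a * b) = v a + v b)
    {c : K} (hc : c ≠ 0) {x : Fin m → K} (hx : x ≠ 0) :
    minVal v (c • x) = v c + minVal v x := by
  have hcx : c • x ≠ 0 := smul_ne_zero hc hx
  have hsupp : (Finset.univ.filter fun i => (c • x) i ≠ 0) =
      Finset.univ.filter fun i => x i ≠ 0 := by
    simp [hc]
  rw [minVal_eq_inf' v hcx, minVal_eq_inf' v hx, Finset.inf'_congr _ hsupp,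
    Finset.apply_inf'_eq_inf'_comp _ (v c + ·) fun _ _ => (min_add_add_left _ _ _).symm]
  intro i hi
  rw [hsupp, Finset.mem_filter] at hi
  exact hv c (x i) hc hi.2

lemma exists_minVal_eq {x : Fin m → K} (hx : x ≠ 0) : ∃ i, x i ≠ 0 ∧ minVal v x = v (x i) := by
  obtain ⟨i, hi, h⟩ := Finset.exists_mem_eq_inf' (nonempty_filter_ne_zero hx) fun i => v (x i)
  exact ⟨i, (Finset.mem_filter.1 hi).2, (minVal_eq_inf' v hx).trans h⟩

end MinVal

lemma finite_minVal_ne_zero {K V : Type} [Field K] {m : ℕ} (val : V → K → ℤ)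
    (hfin : ∀ a : K, a ≠ 0 → {v : V | val v a ≠ 0}.Finite)
    {x : Fin m → K} (hx : x ≠ 0) :
    {v : V | minVal (val v) x ≠ 0}.Finite := by
  refine (Set.finite_iUnion fun i : {i // x i ≠ 0} => hfin (x i) i.2).subset fun v hv => ?_
  obtain ⟨i, hi, h⟩ := exists_minVal_eq (v := val v) hx
  exact Set.mem_iUnion.2 ⟨⟨i, hi⟩, by simpa [h] using hv⟩

section Height

variable {K V : Type} [Field K] {n : ℕ} {val : V → K → ℤ} (deg : V → ℕ) (vinf : V)

lemma hasFiniteSupport_natCast_mul {f : V → ℤ} (hf : {v | f v ≠ 0}.Finite) :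
    Function.HasFiniteSupport fun v => (deg v : ℤ) * f v :=
  hf.subset fun _ hv => right_ne_zero_of_mul hv

lemma htGlobal_eq_finsum (hfin : ∀ a : K, a ≠ 0 → {v : V | val v a ≠ 0}.Finite)
    {x : Fin (n + 1) → K} (hx : x ≠ 0) :
    htGlobal val deg vinf x = ∑ᶠ v, (deg v : ℤ) * minVal (val v) x := by
  rw [htGlobal, ← add_finsum_cond_ne vinf
    (hasFiniteSupport_natCast_mul deg (finite_minVal_ne_zero val hfin hx)), add_comm]
  rfl

lemma htGlobal_smul (hmul : ∀ v, ∀ a b : K, a ≠ 0 → b ≠ 0 → val v (a * b) = val v a + val v b)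
    (hfin : ∀ a : K, a ≠ 0 → {v : V | val v a ≠ 0}.Finite)
    (hprod : ∀ a : K, a ≠ 0 → (∑ᶠ v : V, (deg v : ℤ) * val v a) = 0)
    {c : K} (hc : c ≠ 0) {x : Fin (n + 1) → K} (hx : x ≠ 0) :
    htGlobal val deg vinf (c • x) = htGlobal val deg vinf x := by
  rw [htGlobal_eq_finsum deg vinf hfin (smul_ne_zero hc hx), htGlobal_eq_finsum deg vinf hfin hx]
  simp_rw [minVal_smul (hmul _) hc hx, mul_add]
  rw [finsum_add_distrib (hasFiniteSupport_natCast_mul deg (hfin c hc))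
    (hasFiniteSupport_natCast_mul deg (finite_minVal_ne_zero val hfin hx)), hprod c hc, zero_add]

lemma htGlobal_eq_of_minVal_eq {D : V → ℤ} (hDfin : {v : V | D v ≠ 0}.Finite)
    (hDinf : D vinf = 0) {x : Fin (n + 1) → K}
    (hxD : ∀ v : V, v ≠ vinf → minVal (val v) x = D v) :
    htGlobal val deg vinf x
      = (deg vinf : ℤ) * minVal (val vinf) x + ∑ᶠ v, (deg v : ℤ) * D v := by
  rw [htGlobal, ← add_finsum_cond_ne vinf (hasFiniteSupport_natCast_mul deg hDfin), hDinf,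
    mul_zero, zero_add, add_comm]
  congr 1
  exact finsum_mem_congr rfl fun v hv => by rw [hxD v hv]

end Height

lemma val_inv_of_map_mul {K : Type} [Field K] {v : K → ℤ}
    (hv : ∀ a b : K, a ≠ 0 → b ≠ 0 → v (a * b) = v a + v b) {a : K} (ha : a ≠ 0) :
    v a⁻¹ = -v a := by
  have h1 := hv 1 1 one_ne_zero one_ne_zero
  have h2 := hv a a⁻¹ ha (inv_ne_zero ha)
  rw [mul_one] at h1
  rw [mul_inv_cancel₀ ha] at h2
  omega

section Correspondence

variable {K V : Type} [Field K] {n : ℕ}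
  {val : V → K → ℤ} {deg : V → ℕ} {vinf : V} {D : V → ℤ} {r : ℤ}

variable (val deg vinf D r) in
/-- `x ≠ 0` with `𝔇_0(x) = D` and `ht_∞(x) + deg D = r`. -/
def HasDivisorAndHeight (x : Fin (n + 1) → K) : Prop :=
  x ≠ 0 ∧ (deg vinf : ℤ) * minVal (val vinf) x + (∑ᶠ v : V, (deg v : ℤ) * D v) = r ∧
    ∀ v : V, v ≠ vinf → minVal (val v) x = D v

variable (val deg vinf D r) in
/-- `ht(p) = r` and `[𝔇_0(p)] = [D]`. -/
def HasClassAndHeight (p : Projectivization K (Fin (n + 1) → K)) : Prop :=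
  htGlobal val deg vinf p.rep = r ∧
    ∃ lam : K, lam ≠ 0 ∧ ∀ v : V, v ≠ vinf → minVal (val v) p.rep = D v + val v lam

def UnitAssociated (A : Subring K) (x y : Fin (n + 1) → K) : Prop :=
  ∃ u w : K, u ∈ A ∧ w ∈ A ∧ u * w = 1 ∧ u • y = x

variable (hmul : ∀ v, ∀ a b : K, a ≠ 0 → b ≠ 0 → val v (a * b) = val v a + val v b)
  (hfin : ∀ a : K, a ≠ 0 → {v : V | val v a ≠ 0}.Finite)
  (hprod : ∀ a : K, a ≠ 0 → (∑ᶠ v : V, (deg v : ℤ) * val v a) = 0)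
  (hDfin : {v : V | D v ≠ 0}.Finite) (hDinf : D vinf = 0)

include hmul hfin hprod hDfin hDinf in
lemma hasClassAndHeight_mk {x : Fin (n + 1) → K}
    (hx : HasDivisorAndHeight val deg vinf D r x) :
    HasClassAndHeight val deg vinf D r (Projectivization.mk K x hx.1) := by
  obtain ⟨hx0, hxr, hxD⟩ := hx
  obtain ⟨a, ha⟩ := Projectivization.exists_smul_eq_mk_rep K x hx0
  have ha' : (a : K) • x = (Projectivization.mk K x hx0).rep := ha
  refine ⟨?_, a, a.ne_zero, fun v hv => ?_⟩
  · rw [← ha', htGlobal_smul deg vinf hmul hfin hprod a.ne_zero hx0,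
      htGlobal_eq_of_minVal_eq deg vinf hDfin hDinf hxD, hxr]
  · rw [← ha', minVal_smul (hmul v) a.ne_zero hx0, hxD v hv, add_comm]

lemma mk_eq_mk_of_unitAssociated {A : Subring K} {x y : Fin (n + 1) → K} (hx : x ≠ 0)
    (hy : y ≠ 0) (hxy : UnitAssociated A x y) :
    Projectivization.mk K x hx = Projectivization.mk K y hy := by
  obtain ⟨u, -, -, -, -, hu⟩ := hxy
  exact (Projectivization.mk_eq_mk_iff' K x y hx hy).2 ⟨u, hu⟩

include hmul in
lemma mem_of_smul_eq {A : Subring K}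
    (hA : ∀ a : K, a ∈ A ↔ (a = 0 ∨ (a ≠ 0 ∧ ∀ v : V, v ≠ vinf → 0 ≤ val v a)))
    {a : K} (ha : a ≠ 0) {x y : Fin (n + 1) → K} (hy : y ≠ 0) (hxy : a • y = x)
    (hval : ∀ v : V, v ≠ vinf → minVal (val v) x = minVal (val v) y) : a ∈ A := by
  refine (hA a).2 (Or.inr ⟨ha, fun v hv => ?_⟩)
  have := minVal_smul (hmul v) ha hy
  rw [hxy, hval v hv] at this
  omega

include hmul in
lemma unitAssociated_of_mk_eq_mk {A : Subring K}
    (hA : ∀ a : K, a ∈ A ↔ (a = 0 ∨ (a ≠ 0 ∧ ∀ v : V, v ≠ vinf → 0 ≤ val v a)))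
    {x y : Fin (n + 1) → K} (hx : HasDivisorAndHeight val deg vinf D r x)
    (hy : HasDivisorAndHeight val deg vinf D r y)
    (hxy : Projectivization.mk K x hx.1 = Projectivization.mk K y hy.1) :
    UnitAssociated A x y := by
  obtain ⟨a, ha⟩ := (Projectivization.mk_eq_mk_iff K x y hx.1 hy.1).1 hxy
  have ha' : (a : K) • y = x := ha
  have hval : ∀ v : V, v ≠ vinf → minVal (val v) x = minVal (val v) y := fun v hv => by
    rw [hx.2.2 v hv, hy.2.2 v hv]
  refine ⟨a, (a⁻¹ : Kˣ), mem_of_smul_eq hmul hA a.ne_zero hy.1 ha' hval,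
    mem_of_smul_eq hmul hA (a⁻¹).ne_zero hx.1 (inv_smul_eq_iff.2 ha.symm)
      fun v hv => (hval v hv).symm, a.mul_inv, ha'⟩

include hmul hfin hprod hDfin hDinf in
lemma exists_hasDivisorAndHeight_mk_eq {p : Projectivization K (Fin (n + 1) → K)}
    (hp : HasClassAndHeight val deg vinf D r p) :
    ∃ (x : Fin (n + 1) → K) (hx : HasDivisorAndHeight val deg vinf D r x),
      Projectivization.mk K x hx.1 = p := by
  obtain ⟨hht, lam, hlam, hD⟩ := hp
  have hlam' : lam⁻¹ ≠ 0 := inv_ne_zero hlam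
  have hxD : ∀ v : V, v ≠ vinf → minVal (val v) (lam⁻¹ • p.rep) = D v := fun v hv => by
    rw [minVal_smul (hmul v) hlam' p.rep_nonzero, hD v hv, val_inv_of_map_mul (hmul v) hlam]
    ring
  refine ⟨lam⁻¹ • p.rep, ⟨smul_ne_zero hlam' p.rep_nonzero, ?_, hxD⟩, ?_⟩
  · rw [← htGlobal_eq_of_minVal_eq deg vinf hDfin hDinf hxD,
      htGlobal_smul deg vinf hmul hfin hprod hlam' p.rep_nonzero, hht]
  · conv_rhs => rw [← Projectivization.mk_rep p]
    exact (Projectivization.mk_eq_mk_iff' K _ _ _ _).2 ⟨lam⁻¹, rfl⟩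

include hmul hfin hprod hDfin hDinf in
noncomputable def quotUnitAssociatedEquiv (A : Subring K)
    (hA : ∀ a : K, a ∈ A ↔ (a = 0 ∨ (a ≠ 0 ∧ ∀ v : V, v ≠ vinf → 0 ≤ val v a))) :
    Quot (fun x y : {x : Fin (n + 1) → K // HasDivisorAndHeight val deg vinf D r x} =>
        UnitAssociated A x.1 y.1) ≃
      {p : Projectivization K (Fin (n + 1) → K) // HasClassAndHeight val deg vinf D r p} :=
  Equiv.ofBijective
    (Quot.lift (fun x => ⟨_, hasClassAndHeight_mk hmul hfin hprod hDfin hDinf x.2⟩)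
      fun _ _ hxy => Subtype.ext (mk_eq_mk_of_unitAssociated _ _ hxy))
    ⟨fun q₁ q₂ => Quot.induction_on₂ q₁ q₂ fun x y hxy =>
      Quot.sound (unitAssociated_of_mk_eq_mk hmul hA x.2 y.2 (congrArg Subtype.val hxy)),
    fun ⟨_, hp⟩ =>
      let ⟨x, hx, hxp⟩ := exists_hasDivisorAndHeight_mk_eq hmul hfin hprod hDfin hDinf hp
      ⟨Quot.mk _ ⟨x, hx⟩, Subtype.ext hxp⟩⟩

end Correspondence

theorem stmt_17_general (K : Type) [Field K] (n : ℕ) (V : Type)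
    (val : V → K → ℤ) (deg : V → ℕ) (vinf : V)
    (hmul : ∀ v, ∀ a b : K, a ≠ 0 → b ≠ 0 → val v (a * b) = val v a + val v b)
    (hfin : ∀ a : K, a ≠ 0 → {v : V | val v a ≠ 0}.Finite)
    (hprod : ∀ a : K, a ≠ 0 → (∑ᶠ v : V, (deg v : ℤ) * val v a) = 0)
    -- `A` is the ring of functions regular away from `∞`
    (A : Subring K)
    (hA : ∀ a : K, a ∈ A ↔ (a = 0 ∨ (a ≠ 0 ∧ ∀ v : V, v ≠ vinf → 0 ≤ val v a)))
    -- `D` is an effective divisor supported away from `∞`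
    (D : V → ℤ) (hDfin : {v : V | D v ≠ 0}.Finite)
    (hDinf : D vinf = 0)
    (r : ℤ) :
    ∃ e : Quot (fun x y : {x : Fin (n + 1) → K // x ≠ 0 ∧
          (deg vinf : ℤ) * minVal (val vinf) x + (∑ᶠ v : V, (deg v : ℤ) * D v) = r ∧
          ∀ v : V, v ≠ vinf → minVal (val v) x = D v} =>
        -- `x ~ y` iff `x = u • y` for a unit `u ∈ A^×`
        ∃ u w : K, u ∈ A ∧ w ∈ A ∧ u * w = 1 ∧ u • y.1 = x.1) ≃
      {p : Projectivization K (Fin (n + 1) → K) //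
        htGlobal val deg vinf p.rep = r ∧
        ∃ lam : K, lam ≠ 0 ∧ ∀ v : V, v ≠ vinf →
          minVal (val v) p.rep = D v + val v lam},
      ∀ x, (e (Quot.mk _ x) : Projectivization K (Fin (n + 1) → K))
        = Projectivization.mk K x.1 x.2.1 :=
  ⟨quotUnitAssociatedEquiv hmul hfin hprod hDfin hDinf A hA, fun _ => rfl⟩

/-- Let `K` be a global function field (places indexed by `V`, with `ℤ`-valued
valuations `val v`, degrees `deg v`, distinguished place `vinf` of degree `d_∞`), let
`A ⊂ K` be the ring of functions regular outside `∞`, and let `D` be an effective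
divisor supported away from `∞` (corresponding to an ideal `𝔡 ⊆ A`).  Then the map
`[(x_0,…,x_n)] ↦ [x_0 : ⋯ : x_n]` is a bijection from
`{x ∈ (K^{n+1}\{0})/A^× : ht_∞(x) + deg D = r, 𝔇_0(x) = D}` onto
`{x ∈ ℙⁿ(K) : ht(x) = r, [𝔇_0(x)] = [D]}`, where `[𝔇_0(x)] = [D]` in `Pic(A)` means
that the divisors `𝔇_0(x)` and `D` differ by the divisor of some `λ ∈ K^×`. -/
theorem stmt_17 (K : Type) [Field K] (n : ℕ) (V : Type)
    (val : V → K → ℤ) (deg : V → ℕ) (vinf : V)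
    (hdeg : ∀ v, 1 ≤ deg v)
    (hmul : ∀ v, ∀ a b : K, a ≠ 0 → b ≠ 0 → val v (a * b) = val v a + val v b)
    (hfin : ∀ a : K, a ≠ 0 → {v : V | val v a ≠ 0}.Finite)
    (hprod : ∀ a : K, a ≠ 0 → (∑ᶠ v : V, (deg v : ℤ) * val v a) = 0)
    -- `A` is the ring of functions regular away from `∞`
    (A : Subring K)
    (hA : ∀ a : K, a ∈ A ↔ (a = 0 ∨ (a ≠ 0 ∧ ∀ v : V, v ≠ vinf → 0 ≤ val v a)))
    -- `D` is an effective divisor supported away from `∞`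
    (D : V → ℤ) (hDfin : {v : V | D v ≠ 0}.Finite) (hDeff : ∀ v, 0 ≤ D v)
    (hDinf : D vinf = 0)
    (r : ℤ) :
    ∃ e : Quot (fun x y : {x : Fin (n + 1) → K // x ≠ 0 ∧
          (deg vinf : ℤ) * minVal (val vinf) x + (∑ᶠ v : V, (deg v : ℤ) * D v) = r ∧
          ∀ v : V, v ≠ vinf → minVal (val v) x = D v} =>
        -- `x ~ y` iff `x = u • y` for a unit `u ∈ A^×`
        ∃ u w : K, u ∈ A ∧ w ∈ A ∧ u * w = 1 ∧ u • y.1 = x.1) ≃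
      {p : Projectivization K (Fin (n + 1) → K) //
        htGlobal val deg vinf p.rep = r ∧
        ∃ lam : K, lam ≠ 0 ∧ ∀ v : V, v ≠ vinf →
          minVal (val v) p.rep = D v + val v lam},
      ∀ x, (e (Quot.mk _ x) : Projectivization K (Fin (n + 1) → K))
        = Projectivization.mk K x.1 x.2.1 :=
  stmt_17_general K n V val deg vinf hmul hfin hprod A hA D hDfin hDinf r
end
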